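/- arXiv:2207.01970 — 5 statements merged into one kernel-verified Lean document; each statement's English description precedes it below -/
import Mathlib

section
/- The function f(x) = ((2-x)/(1-x))^(1-x) is decreasing on the interval [1/e, 1). -/
open Real Set

lemma g_strictAntiOn :
    StrictAntiOn (fun x : ℝ => (1 - x) * Real.log ((2 - x) / (1 - x)))
      (Set.Ico (1 / Real.exp 1) 1) := by
  apply strictAntiOn_of_deriv_neg (convex_Ico _ _)
  · apply ContinuousOn.mul (by fun_prop)
    · apply ContinuousOn.log
      · apply ContinuousOn.div (by fun_prop) (by fun_prop)
        intro x hx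
        have h1 : x < 1 := hx.2
        intro h; linarith [h]
      intro x hx
      have h1 : x < 1 := hx.2
      have h1' : (0:ℝ) < 1 - x := by linarith
      have h2 : (0:ℝ) < 2 - x := by linarith
      positivity
  · intro x hx
    rw [interior_Ico] at hx
    have h1 : (0:ℝ) < 1 - x := by linarith [hx.2]
    have h2 : (0:ℝ) < 2 - x := by linarith [hx.2]
    -- compute the derivative via an eventually-equal function
    have heq : (fun y : ℝ => (1 - y) * Real.log ((2 - y) / (1 - y)))
        =ᶠ[nhds x] (fun y : ℝ => (1 - y) * (Real.log (2 - y) - Real.log (1 - y))) := by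
      filter_upwards [Iio_mem_nhds hx.2] with y hy
      have hy1 : (0:ℝ) < 1 - y := by linarith [mem_Iio.mp hy]
      have hy2 : (0:ℝ) < 2 - y := by linarith
      rw [Real.log_div hy2.ne' hy1.ne']
    have hd1 : HasDerivAt (fun y : ℝ => (2:ℝ) - y) (-1) x := by
      simpa using (hasDerivAt_id x).const_sub 2
    have hd2 : HasDerivAt (fun y : ℝ => (1:ℝ) - y) (-1) x := by
      simpa using (hasDerivAt_id x).const_sub 1
    have hl1 : HasDerivAt (fun y : ℝ => Real.log (2 - y)) (-1 / (2 - x)) x :=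
      hd1.log h2.ne'
    have hl2 : HasDerivAt (fun y : ℝ => Real.log (1 - y)) (-1 / (1 - x)) x :=
      hd2.log h1.ne'
    have hprod : HasDerivAt
        (fun y : ℝ => (1 - y) * (Real.log (2 - y) - Real.log (1 - y)))
        ((-1) * (Real.log (2 - x) - Real.log (1 - x))
          + (1 - x) * (-1 / (2 - x) - -1 / (1 - x))) x :=
      hd2.mul (hl1.sub hl2)
    rw [heq.deriv_eq, hprod.deriv]
    -- now show the value is negative
    have ha : 1 < (2 - x) / (1 - x) := (one_lt_div h1).2 (by linarith)
    have ha0 : (0:ℝ) < (2 - x) / (1 - x) := by linarith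
    have hinv : (0:ℝ) < ((2 - x) / (1 - x))⁻¹ := by positivity
    have hne : ((2 - x) / (1 - x))⁻¹ ≠ 1 := by
      intro h; rw [inv_eq_one] at h; exact (ne_of_gt ha) h
    have hlog := Real.log_lt_sub_one_of_pos hinv hne
    rw [Real.log_inv] at hlog
    have hkey : 1 - ((2 - x) / (1 - x))⁻¹ < Real.log ((2 - x) / (1 - x)) := by
      linarith
    rw [Real.log_div h2.ne' h1.ne'] at hkey
    rw [inv_div] at hkey
    have : (1 - x) / (2 - x) = (1 - x) * (2 - x)⁻¹ := by ring
    have hval : (1 - x) * (-1 / (2 - x) - -1 / (1 - x)) = 1 - (1 - x) / (2 - x) := by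
      field_simp
      ring
    nlinarith [hkey, hval]

theorem f_strictAntiOn :
    StrictAntiOn (fun x : ℝ => ((2 - x) / (1 - x)) ^ (1 - x))
      (Set.Ico (1 / Real.exp 1) 1) := by
  intro x hx y hy hxy
  have hx1 : (0:ℝ) < (2 - x) / (1 - x) := by
    have := hx.2; have h1 : (0:ℝ) < 1 - x := by linarith
    have h2 : (0:ℝ) < 2 - x := by linarith
    positivity
  have hy1 : (0:ℝ) < (2 - y) / (1 - y) := by
    have := hy.2; have h1 : (0:ℝ) < 1 - y := by linarith
    have h2 : (0:ℝ) < 2 - y := by linarith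
    positivity
  simp only
  rw [Real.rpow_def_of_pos hx1, Real.rpow_def_of_pos hy1]
  apply Real.exp_lt_exp.2
  have := g_strictAntiOn hx hy hxy
  simpa [mul_comm] using this
end

section
/- Let F = (F_1,…,F_T) be a T-tuple of subsets of [n] with coverage values v_i = 1 + |{t : i ∈ F_t}|, and let X ⊆ [n], t ∈ [T]. Define φ(G) = ∑_{i=1}^n log(v_i(G)) for any tuple G, and let (X, F_{-t}) denote F with F_t replaced by X. Then φ(X, F_{-t}) - φ(F) ≥ ∑_{i∈X} 1/(v_i+1) - ∑_{j∈F_t} 1/(v_j - 1). -/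
/-!
Replacing `F t` by `X` moves each coverage value `v_i` by `[i ∈ X] - [i ∈ F t]`, so the
change of `φ` is a sum of per-agent changes of `log v_i`. By `log x ≤ x - 1` applied to
`(v + 1) / v` and to its inverse, `1 / (v + 1) ≤ log (v + 1) - log v ≤ 1 / v`, which bounds each
per-agent change from below by the corresponding summand of the right-hand side.
-/

/-- Coverage value of agent `i` under solution `F`. -/
def cov {n T : ℕ} (F : Fin T → Finset (Fin n)) (i : Fin n) : ℕ :=
  1 + (Finset.univ.filter fun t => i ∈ F t).card

/-- Log social welfare of a solution. -/
noncomputable def phi {n T : ℕ} (F : Fin T → Finset (Fin n)) : ℝ :=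
  ∑ i, Real.log (cov F i)

open Finset Function Real

lemma Finset.card_filter_mem_update_add {ι α : Type*} [Fintype ι] [DecidableEq ι] [DecidableEq α]
    (F : ι → Finset α) (t : ι) (X : Finset α) (i : α) :
    #{s | i ∈ update F t X s} + (if i ∈ F t then 1 else 0) =
      #{s | i ∈ F s} + (if i ∈ X then 1 else 0) := by
  have hrest : ∑ s ∈ {t}ᶜ, (if i ∈ update F t X s then 1 else 0) =
      ∑ s ∈ {t}ᶜ, (if i ∈ F s then 1 else 0) :=
    sum_congr rfl fun s hs => by rw [update_of_ne (by simpa using hs)]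
  rw [card_filter, card_filter, Fintype.sum_eq_add_sum_compl t,
    Fintype.sum_eq_add_sum_compl t, hrest, update_self]
  ring

lemma Real.inv_add_one_le_log_add_one_sub_log {c : ℝ} (hc : 0 < c) :
    1 / (c + 1) ≤ log (c + 1) - log c := by
  have h := one_sub_inv_le_log_of_pos (show 0 < (c + 1) / c by positivity)
  rw [log_div (by positivity) hc.ne', inv_div] at h
  have : 1 - c / (c + 1) = 1 / (c + 1) := by field_simp; ring
  linarith

lemma Real.log_add_one_sub_log_le_inv {c : ℝ} (hc : 0 < c) :
    log (c + 1) - log c ≤ 1 / c := by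
  have h := log_le_sub_one_of_pos (show 0 < (c + 1) / c by positivity)
  rw [log_div (by positivity) hc.ne'] at h
  have : (c + 1) / c - 1 = 1 / c := by field_simp; ring
  linarith

lemma cov_update_add {n T : ℕ} (F : Fin T → Finset (Fin n)) (t : Fin T) (X : Finset (Fin n))
    (i : Fin n) :
    cov (update F t X) i + (if i ∈ F t then 1 else 0) = cov F i + (if i ∈ X then 1 else 0) := by
  have := card_filter_mem_update_add F t X i
  simp only [cov]
  omega

lemma ite_add_one_le_cov {n T : ℕ} (F : Fin T → Finset (Fin n)) (t : Fin T) (i : Fin n) :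
    (if i ∈ F t then 1 else 0) + 1 ≤ cov F i := by
  split_ifs with h
  · have : 0 < #{s | i ∈ F s} := card_pos.2 ⟨t, by simpa using h⟩
    simp only [cov]
    omega
  · simp [cov]

lemma log_cov_update_sub_log_cov_ge {n T : ℕ} (F : Fin T → Finset (Fin n)) (t : Fin T)
    (X : Finset (Fin n)) (i : Fin n) :
    (if i ∈ X then 1 / ((cov F i : ℝ) + 1) else 0) -
        (if i ∈ F t then 1 / ((cov F i : ℝ) - 1) else 0) ≤
      log (cov (update F t X) i) - log (cov F i) := by
  have hcov := cov_update_add F t X i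
  have hpos := ite_add_one_le_cov F t i
  by_cases hX : i ∈ X <;> by_cases hF : i ∈ F t <;>
    simp only [hX, hF, if_true, if_false] at hcov hpos ⊢
  · have hc2 : (2 : ℝ) ≤ cov F i := by exact_mod_cast hpos
    rw [show cov (update F t X) i = cov F i by omega, sub_self, sub_nonpos]
    exact one_div_le_one_div_of_le (by linarith) (by linarith)
  · rw [show cov (update F t X) i = cov F i + 1 by omega, sub_zero, Nat.cast_add_one]
    exact inv_add_one_le_log_add_one_sub_log (by exact_mod_cast hpos)
  · rw [show cov F i = cov (update F t X) i + 1 by omega, Nat.cast_add_one, add_sub_cancel_right]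
    have := log_add_one_sub_log_le_inv (show 0 < (cov (update F t X) i : ℝ) by
      exact_mod_cast (by omega : 0 < cov (update F t X) i))
    linarith
  · rw [show cov (update F t X) i = cov F i by omega, sub_self, sub_self]

theorem phi_update_lower_bound {n T : ℕ} (F : Fin T → Finset (Fin n))
    (X : Finset (Fin n)) (t : Fin T) :
    phi (Function.update F t X) - phi F ≥
      (∑ i ∈ X, 1 / ((cov F i : ℝ) + 1)) -
        ∑ j ∈ F t, 1 / ((cov F j : ℝ) - 1) := by
  rw [ge_iff_le, ← Fintype.sum_ite_mem X, ← Fintype.sum_ite_mem (F t), ← sum_sub_distrib, phi, phi,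
    ← sum_sub_distrib]
  exact sum_le_sum fun i _ => log_cov_update_sub_log_cov_ge F t X i
end

section
/- Let F = (F_1,…,F_T) be a T-tuple of subsets of [n] with coverage values v_i = 1 + |{t : i ∈ F_t}|, let X ⊆ [n] and t ∈ [T]. Define φ(G) = ∑_i log(v_i(G)), and weights w^t_i = log(v_i) - log(v_i - 1) if i ∈ F_t, and w^t_i = log(v_i+1) - log(v_i) otherwise. Then ∑_{i∈X} w^t_i = (φ(X, F_{-t}) - φ(F)) + ∑_{j∈F_t} w^t_j. -/
/-- Weight of agent `i` for index `t`, with respect to solution `F`. -/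
noncomputable def wt {n T : ℕ} (F : Fin T → Finset (Fin n)) (t : Fin T) (i : Fin n) : ℝ :=
  if i ∈ F t then Real.log (cov F i) - Real.log ((cov F i : ℝ) - 1)
  else Real.log ((cov F i : ℝ) + 1) - Real.log (cov F i)

lemma cov_update_int {n T : ℕ} (F : Fin T → Finset (Fin n)) (X : Finset (Fin n))
    (t : Fin T) (i : Fin n) :
    (cov (Function.update F t X) i : ℤ) =
      (cov F i : ℤ) + (if i ∈ X then 1 else 0) - (if i ∈ F t then 1 else 0) := by
  have h1 : ∀ (G : Fin T → Finset (Fin n)),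
      (cov G i : ℤ) = 1 + ∑ s, (if i ∈ G s then (1 : ℤ) else 0) := by
    intro G
    rw [cov, Finset.card_filter]
    push_cast
    ring
  rw [h1, h1]
  have h2 : (fun s => if i ∈ Function.update F t X s then (1 : ℤ) else 0) =
      Function.update (fun s => if i ∈ F s then (1 : ℤ) else 0) t
        (if i ∈ X then 1 else 0) := by
    funext s
    by_cases hs : s = t
    · subst hs; simp
    · simp [Function.update_of_ne hs]
  rw [h2, Finset.sum_update_of_mem (Finset.mem_univ t),
    ← Finset.add_sum_erase _ _ (Finset.mem_univ t), Finset.sdiff_singleton_eq_erase]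
  ring

lemma cov_pos {n T : ℕ} (F : Fin T → Finset (Fin n)) (i : Fin n) :
    1 ≤ cov F i := by simp [cov]

lemma log_cov_update {n T : ℕ} (F : Fin T → Finset (Fin n)) (X : Finset (Fin n))
    (t : Fin T) (i : Fin n) :
    Real.log (cov (Function.update F t X) i) - Real.log (cov F i) =
      (if i ∈ X then wt F t i else 0) - (if i ∈ F t then wt F t i else 0) := by
  have hc := cov_update_int F X t i
  have hcast : (cov (Function.update F t X) i : ℝ) =
      (cov F i : ℝ) + (if i ∈ X then 1 else 0) - (if i ∈ F t then 1 else 0) := by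
    have := congrArg (fun z : ℤ => (z : ℝ)) hc
    push_cast at this
    split_ifs at this ⊢ <;> push_cast <;> linarith
  by_cases hX : i ∈ X <;> by_cases hF : i ∈ F t <;>
    simp only [hX, hF, if_true, if_false, wt] at hcast ⊢ <;>
    rw [hcast] <;> ring_nf <;> simp

theorem weight_eq_phi_diff {n T : ℕ} (F : Fin T → Finset (Fin n))
    (X : Finset (Fin n)) (t : Fin T) :
    ∑ i ∈ X, wt F t i =
      (phi (Function.update F t X) - phi F) + ∑ j ∈ F t, wt F t j := by
  have h : phi (Function.update F t X) - phi F =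
      ∑ i, ((if i ∈ X then wt F t i else 0) - (if i ∈ F t then wt F t i else 0)) := by
    rw [phi, phi, ← Finset.sum_sub_distrib]
    exact Finset.sum_congr rfl fun i _ => log_cov_update F X t i
  rw [h, Finset.sum_sub_distrib, Finset.sum_ite_mem, Finset.sum_ite_mem,
    Finset.univ_inter, Finset.univ_inter]
  ring
end

section
/- Let n, T be positive integers, ε = 1/(16nT), and for each i ∈ [n] let v_i, v*_i ∈ {1,…,T+1} with v_i ≥ v*_i/(T+1). For each integer d with 2 ≤ d ≤ ⌈log₂(T+1)⌉, let X_{2^d} = {i : v*_i/(2^{d+1}(2.25+ε)) ≤ v_i < v*_i/(2^d(2.25+ε))}, and suppose |X_{2^d}| ≤ n/2^d for all such d. Then (∏_{i=1}^n v_i / ∏_{i=1}^n v*_i)^{1/n} ≥ 1/(18 + 8ε). -/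
/-! Put `c = 2.25 + ε`. An agent with `v i ≥ vstar i / (4c)` loses at most the factor `4c`.
Any other agent lies in a band `X_{2^d}` with `2 ≤ d ≤ D = ⌈log₂ (T + 1)⌉`, since
`1 ≤ v i` and `vstar i ≤ T + 1 ≤ 2^D`, and it loses at most `4c · 2^(d-1)`. Hence
`∏ v i / vstar i ≥ (4c)^(-n) · 2^(-W)` with `W = ∑ d, (d - 1) |X_{2^d}| ≤ n ∑_{d ≥ 2} (d - 1) / 2^d ≤ n`,
so the geometric mean is at least `1 / (8c) = 1 / (18 + 8ε)`. -/

open Finset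

theorem sum_Icc_two_sub_one_div_two_pow (D : ℕ) :
    ∑ d ∈ Icc 2 D, ((d : ℝ) - 1) / 2 ^ d = 1 - (D + 1) / 2 ^ D := by
  induction D with
  | zero => simp
  | succ m ih =>
    rcases Nat.eq_zero_or_pos m with rfl | hm
    · simp
    · rw [sum_Icc_succ_top (by omega), ih]
      push_cast
      field_simp
      ring

theorem exists_two_pow_lt_le {r : ℝ} (hr : 1 < r) : ∃ k : ℕ, 2 ^ k < r ∧ r ≤ 2 ^ (k + 1) := by
  have hceil : 1 < ⌈r⌉₊ := Nat.lt_ceil.2 (by exact_mod_cast hr)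
  obtain ⟨k, hk⟩ : ∃ k, Nat.clog 2 ⌈r⌉₊ = k + 1 :=
    Nat.exists_eq_add_one_of_ne_zero (Nat.clog_pos one_lt_two hceil).ne'
  refine ⟨k, ?_, ?_⟩
  · have := Nat.pow_pred_clog_lt_self one_lt_two hceil
    rw [hk, Nat.pred_succ] at this
    exact_mod_cast Nat.lt_ceil.1 this
  · have := Nat.le_pow_clog one_lt_two ⌈r⌉₊
    rw [hk] at this
    exact_mod_cast Nat.ceil_le.1 this

theorem exists_mem_Icc_dyadic_band {a b c : ℝ} {D : ℕ} (ha : 1 ≤ a) (hbD : b ≤ 2 ^ D)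
    (hc : 1 / 2 ≤ c) (hlt : a < b / (2 ^ 2 * c)) :
    ∃ d ∈ Icc 2 D, b / (2 ^ (d + 1) * c) ≤ a ∧ a < b / (2 ^ d * c) := by
  have hc0 : 0 < c := by linarith
  have ha0 : 0 < a := by linarith
  have hr : 4 < b / (c * a) := by
    rw [lt_div_iff₀ (by positivity)]; rw [lt_div_iff₀ (by positivity)] at hlt; linarith
  obtain ⟨k, hlo, hhi⟩ := exists_two_pow_lt_le (by linarith : 1 < b / (c * a))
  have hk2 : 2 ≤ k := by
    have : (2 : ℝ) ^ 2 < 2 ^ (k + 1) := by linarith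
    have := (pow_lt_pow_iff_right₀ one_lt_two).1 this
    omega
  have hkD : k ≤ D := by
    have : b / (c * a) ≤ 2 ^ (D + 1) := by
      have : 1 ≤ 2 * c * a := by nlinarith
      rw [div_le_iff₀ (by positivity), pow_succ]
      nlinarith [pow_pos (two_pos (α := ℝ)) D]
    have := (pow_lt_pow_iff_right₀ one_lt_two).1 (hlo.trans_le this)
    omega
  refine ⟨k, mem_Icc.2 ⟨hk2, hkD⟩, ?_, ?_⟩
  · rw [div_le_iff₀ (by positivity)] at hhi
    rw [div_le_iff₀ (by positivity)]; linarith
  · rw [lt_div_iff₀ (by positivity)] at hlo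
    rw [lt_div_iff₀ (by positivity)]; linarith

section Bands

variable {ι : Type*} [Fintype ι] [DecidableEq ι] (c : ℝ) (x y : ι → ℝ)

/-- The paper's `X_{2^d}`. -/
noncomputable def band (d : ℕ) : Finset ι :=
  univ.filter fun i => y i / (2 ^ (d + 1) * c) ≤ x i ∧ x i < y i / (2 ^ d * c)

noncomputable def bandWeight (D : ℕ) (i : ι) : ℕ :=
  ∑ d ∈ Icc 2 D, if i ∈ band c x y d then d - 1 else 0

variable {c x y}

theorem one_div_four_mul_half_pow_bandWeight_le {D : ℕ} {i : ι} (hx : 1 ≤ x i) (hy : 0 < y i)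
    (hyD : y i ≤ 2 ^ D) (hc : 1 / 2 ≤ c) :
    1 / (4 * c) * (1 / 2) ^ bandWeight c x y D i ≤ x i / y i := by
  have hc0 : 0 < c := by linarith
  by_cases hlt : x i < y i / (2 ^ 2 * c)
  · obtain ⟨d, hd, hband⟩ := exists_mem_Icc_dyadic_band hx hyD hc hlt
    have hmem : i ∈ band c x y d := mem_filter.2 ⟨mem_univ i, hband⟩
    obtain ⟨k, rfl⟩ : ∃ k, d = k + 1 := Nat.exists_eq_add_one_of_ne_zero (by grind)
    have hweight : k ≤ bandWeight c x y D i := by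
      have := single_le_sum (f := fun d => if i ∈ band c x y d then d - 1 else 0)
        (fun _ _ => Nat.zero_le _) hd
      simpa [bandWeight, hmem] using this
    calc 1 / (4 * c) * (1 / 2) ^ bandWeight c x y D i ≤ 1 / (4 * c) * (1 / 2) ^ k :=
          mul_le_mul_of_nonneg_left (pow_le_pow_of_le_one (by norm_num) (by norm_num) hweight)
            (by positivity)
      _ = 1 / (2 ^ (k + 1 + 1) * c) := by rw [one_div_pow]; field_simp; ring
      _ ≤ x i / y i := by
          rw [le_div_iff₀ hy, one_div_mul_eq_div]; exact hband.1
  · calc 1 / (4 * c) * (1 / 2) ^ bandWeight c x y D i ≤ 1 / (4 * c) := by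
          apply mul_le_of_le_one_right (by positivity)
          exact pow_le_one₀ (by norm_num) (by norm_num)
      _ ≤ x i / y i := by
          rw [le_div_iff₀ hy, one_div_mul_eq_div]; norm_num at hlt ⊢; linarith

theorem sum_bandWeight_eq (D : ℕ) :
    ∑ i, bandWeight c x y D i = ∑ d ∈ Icc 2 D, #(band c x y d) * (d - 1) := by
  unfold bandWeight
  rw [sum_comm]
  refine sum_congr rfl fun d _ => ?_
  rw [sum_ite_mem, univ_inter, sum_const, smul_eq_mul]

theorem sum_bandWeight_le {D : ℕ} {N : ℝ} (hN : 0 ≤ N)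
    (hcard : ∀ d ∈ Icc 2 D, (#(band c x y d) : ℝ) ≤ N / 2 ^ d) :
    ((∑ i, bandWeight c x y D i : ℕ) : ℝ) ≤ N := by
  rw [sum_bandWeight_eq, Nat.cast_sum]
  calc ∑ d ∈ Icc 2 D, ((#(band c x y d) * (d - 1) : ℕ) : ℝ)
      ≤ ∑ d ∈ Icc 2 D, N / 2 ^ d * ((d : ℝ) - 1) := by
        refine sum_le_sum fun d hd => ?_
        have hd2 : 2 ≤ d := (mem_Icc.1 hd).1
        rw [Nat.cast_mul, Nat.cast_sub (by omega), Nat.cast_one]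
        gcongr
        · have : (2 : ℝ) ≤ d := by exact_mod_cast hd2
          linarith
        · exact hcard d hd
    _ = N * ∑ d ∈ Icc 2 D, ((d : ℝ) - 1) / 2 ^ d := by
        rw [mul_sum]; refine sum_congr rfl fun d _ => by ring
    _ ≤ N := by
        refine mul_le_of_le_one_right hN ?_
        rw [sum_Icc_two_sub_one_div_two_pow]
        have : (0 : ℝ) ≤ (D + 1) / 2 ^ D := by positivity
        linarith

theorem one_div_eight_mul_pow_le_prod_div {D : ℕ} (hx : ∀ i, 1 ≤ x i) (hy : ∀ i, 0 < y i)
    (hyD : ∀ i, y i ≤ 2 ^ D) (hc : 1 / 2 ≤ c)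
    (hcard : ∀ d ∈ Icc 2 D, (#(band c x y d) : ℝ) ≤ Fintype.card ι / 2 ^ d) :
    (1 / (8 * c)) ^ Fintype.card ι ≤ ∏ i, x i / y i := by
  have hc0 : 0 < c := by linarith
  have hsum : ∑ i, bandWeight c x y D i ≤ Fintype.card ι := by
    exact_mod_cast sum_bandWeight_le (Nat.cast_nonneg _) hcard
  calc (1 / (8 * c)) ^ Fintype.card ι
      = (1 / (4 * c)) ^ Fintype.card ι * (1 / 2) ^ Fintype.card ι := by
        rw [← mul_pow]; congr 1; field_simp; ring
    _ ≤ (1 / (4 * c)) ^ Fintype.card ι * (1 / 2) ^ ∑ i, bandWeight c x y D i :=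
        mul_le_mul_of_nonneg_left (pow_le_pow_of_le_one (by norm_num) (by norm_num) hsum)
          (by positivity)
    _ = ∏ i, 1 / (4 * c) * (1 / 2) ^ bandWeight c x y D i := by
        rw [prod_mul_distrib, prod_const, prod_pow_eq_pow_sum, card_univ]
    _ ≤ ∏ i, x i / y i :=
        prod_le_prod (fun _ _ => by positivity)
          fun i _ => one_div_four_mul_half_pow_bandWeight_le (hx i) (hy i) (hyD i) hc

end Bands

theorem le_rpow_one_div_of_pow_le {a P : ℝ} {n : ℕ} (ha : 0 ≤ a) (ha1 : a ≤ 1) (h : a ^ n ≤ P) :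
    a ≤ P ^ ((1 : ℝ) / n) := by
  rcases Nat.eq_zero_or_pos n with rfl | hn
  · simpa using ha1
  calc a = (a ^ n) ^ ((1 : ℝ) / n) := by
        rw [one_div, Real.pow_rpow_inv_natCast ha hn.ne']
    _ ≤ P ^ ((1 : ℝ) / n) := by gcongr

theorem approx_ratio_bound_general (n T : ℕ)
    (ε : ℝ) (hε : ε = 1 / (16 * n * T))
    (v vstar : Fin n → ℕ)
    (hv : ∀ i, 1 ≤ v i ∧ v i ≤ T + 1)
    (hvstar : ∀ i, 1 ≤ vstar i ∧ vstar i ≤ T + 1)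
    (hX : ∀ d : ℕ, 2 ≤ d → d ≤ Nat.clog 2 (T + 1) →
      ((Finset.univ.filter fun i : Fin n =>
          (vstar i : ℝ) / (2 ^ (d + 1) * (2.25 + ε)) ≤ (v i : ℝ) ∧
          (v i : ℝ) < (vstar i : ℝ) / (2 ^ d * (2.25 + ε))).card : ℝ)
        ≤ n / 2 ^ d) :
    ((∏ i, (v i : ℝ)) / ∏ i, (vstar i : ℝ)) ^ ((1 : ℝ) / n) ≥
      1 / (18 + 8 * ε) := by
  have hε0 : 0 ≤ ε := hε ▸ by positivity
  have hprod := one_div_eight_mul_pow_le_prod_div (c := 2.25 + ε) (D := Nat.clog 2 (T + 1))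
    (x := fun i => (v i : ℝ)) (y := fun i => (vstar i : ℝ))
    (fun i => by exact_mod_cast (hv i).1) (fun i => by exact_mod_cast (hvstar i).1)
    (fun i => by exact_mod_cast (hvstar i).2.trans (Nat.le_pow_clog one_lt_two _))
    (by linarith)
    (fun d hd => by rw [Fintype.card_fin]; exact hX d (mem_Icc.1 hd).1 (mem_Icc.1 hd).2)
  rw [Fintype.card_fin, prod_div_distrib] at hprod
  have h8 : (18 : ℝ) + 8 * ε = 8 * (2.25 + ε) := by norm_num; ring
  rw [ge_iff_le, h8]
  exact le_rpow_one_div_of_pow_le (by positivity)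
    ((div_le_one (by positivity)).2 (by linarith)) hprod

theorem approx_ratio_bound (n T : ℕ) (hn : 0 < n) (hT : 0 < T)
    (ε : ℝ) (hε : ε = 1 / (16 * n * T))
    (v vstar : Fin n → ℕ)
    (hv : ∀ i, 1 ≤ v i ∧ v i ≤ T + 1)
    (hvstar : ∀ i, 1 ≤ vstar i ∧ vstar i ≤ T + 1)
    (hratio : ∀ i, (v i : ℝ) ≥ (vstar i : ℝ) / (T + 1))
    (hX : ∀ d : ℕ, 2 ≤ d → d ≤ Nat.clog 2 (T + 1) →
      ((Finset.univ.filter fun i : Fin n =>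
          (vstar i : ℝ) / (2 ^ (d + 1) * (2.25 + ε)) ≤ (v i : ℝ) ∧
          (v i : ℝ) < (vstar i : ℝ) / (2 ^ d * (2.25 + ε))).card : ℝ)
        ≤ n / 2 ^ d) :
    ((∏ i, (v i : ℝ)) / ∏ i, (vstar i : ℝ)) ^ ((1 : ℝ) / n) ≥
      1 / (18 + 8 * ε) :=
  approx_ratio_bound_general n T ε hε v vstar hv hvstar hX
end

section
/- If ℓ and n are positive integers with n/e ≤ ℓ < n, then ((2n-ℓ)/(n-ℓ))^{(n-ℓ)/n} ≤ 1.83. -/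
/-! With `t = (n - ℓ) / n` the base is `1 + t⁻¹`, so the quantity is `(1 + t⁻¹) ^ t`, which
increases with `t` (its logarithm has derivative `log (1 + t⁻¹) - (1 + t)⁻¹ ≥ 0`). The hypothesis
`n / e ≤ ℓ` gives `t ≤ 1 - 1/e < 7/11`, and `(1 + 11/7) ^ (7/11) ≤ 1.83` is the rational
inequality `(18/7) ^ 7 ≤ 1.83 ^ 11`. -/

open Real Set

lemma hasDerivAt_mul_log_one_add_inv {t : ℝ} (ht : 0 < t) :
    HasDerivAt (fun s => s * log (1 + s⁻¹)) (log (1 + t⁻¹) - (1 + t)⁻¹) t := by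
  have h : HasDerivAt (fun s => s * log (1 + s⁻¹))
      (1 * log (1 + t⁻¹) + t * (-(t ^ 2)⁻¹ / (1 + t⁻¹))) t :=
    (hasDerivAt_id' t).mul (((hasDerivAt_inv ht.ne').const_add 1).log (by positivity))
  convert h using 1
  field_simp
  ring

lemma monotoneOn_mul_log_one_add_inv :
    MonotoneOn (fun t : ℝ => t * log (1 + t⁻¹)) (Ioi 0) := by
  refine monotoneOn_of_deriv_nonneg (convex_Ioi 0)
    (fun t ht => (hasDerivAt_mul_log_one_add_inv ht).continuousAt.continuousWithinAt)
    (fun t ht => (hasDerivAt_mul_log_one_add_inv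
      (interior_subset ht)).differentiableAt.differentiableWithinAt)
    fun t ht => ?_
  replace ht : 0 < t := by rwa [interior_Ioi] at ht
  rw [(hasDerivAt_mul_log_one_add_inv ht).deriv, sub_nonneg]
  convert one_sub_inv_le_log_of_pos (x := 1 + t⁻¹) (by positivity) using 1
  field_simp
  ring

lemma monotoneOn_one_add_inv_rpow_self :
    MonotoneOn (fun t : ℝ => (1 + t⁻¹) ^ t) (Ioi 0) := by
  intro s hs t ht hst
  have hs' : 0 < s := hs
  have ht' : 0 < t := ht
  simp only [rpow_def_of_pos (by positivity : (0 : ℝ) < 1 + s⁻¹),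
    rpow_def_of_pos (by positivity : (0 : ℝ) < 1 + t⁻¹), exp_le_exp, mul_comm _ s, mul_comm _ t]
  exact monotoneOn_mul_log_one_add_inv hs ht hst

theorem no_case_numeric_general (ℓ n : ℕ)
    (h1 : (n : ℝ) / Real.exp 1 ≤ ℓ) (h2 : ℓ < n) :
    (((2 * n : ℝ) - ℓ) / ((n : ℝ) - ℓ)) ^ (((n : ℝ) - ℓ) / n) ≤ 1.83 := by
  have hℓn : (ℓ : ℝ) < n := by exact_mod_cast h2
  have hn : (0 : ℝ) < n := by linarith [(Nat.cast_nonneg ℓ : (0 : ℝ) ≤ ℓ)]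
  set t : ℝ := ((n : ℝ) - ℓ) / n
  have ht : 0 < t := div_pos (by linarith) hn
  have ht_le : t ≤ 7 / 11 := by
    have hnℓ : (n : ℝ) ≤ ℓ * exp 1 := (div_le_iff₀ (exp_pos 1)).mp h1
    have he : (ℓ : ℝ) * exp 1 ≤ ℓ * 2.75 :=
      mul_le_mul_of_nonneg_left (by linarith [exp_one_lt_d9]) (Nat.cast_nonneg ℓ)
    rw [div_le_iff₀ hn]
    linarith
  have hbase : ((2 * n : ℝ) - ℓ) / ((n : ℝ) - ℓ) = 1 + t⁻¹ := by
    have : (n : ℝ) - ℓ ≠ 0 := by linarith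
    simp only [t, inv_div]
    field_simp
    ring
  calc (((2 * n : ℝ) - ℓ) / ((n : ℝ) - ℓ)) ^ t = (1 + t⁻¹) ^ t := by rw [hbase]
    _ ≤ (1 + (7 / 11 : ℝ)⁻¹) ^ (7 / 11 : ℝ) :=
      monotoneOn_one_add_inv_rpow_self ht (by norm_num : (0 : ℝ) < 7 / 11) ht_le
    _ ≤ 1.83 := by
      rw [← rpow_le_rpow_iff (z := 11) (by positivity) (by norm_num) (by norm_num),
        ← rpow_mul (by positivity)]
      norm_num

theorem no_case_numeric (ℓ n : ℕ) (hℓ : 0 < ℓ) (hn : 0 < n)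
    (h1 : (n : ℝ) / Real.exp 1 ≤ ℓ) (h2 : ℓ < n) :
    (((2 * n : ℝ) - ℓ) / ((n : ℝ) - ℓ)) ^ (((n : ℝ) - ℓ) / n) ≤ 1.83 :=
  no_case_numeric_general ℓ n h1 h2
end
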